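/- arXiv:1207.0118 — 11 statements merged into one kernel-verified Lean document; each statement's English description precedes it below -/
import Mathlib

section
/- For every set I and every L_A-substructure B of the product L_A-structure on I → A, there exists an order filter F on the lattice Setoid I of equivalence relations on I such that for every function f : I → A, f belongs to B if and only if the kernel equivalence relation ker f belongs to F. -/
open FirstOrder Language

/-- The language whose `n`-ary function symbols are all functions `(Fin n → A) → A`. -/
abbrev LA (A : Type*) : FirstOrder.Language := ⟨fun n => (Fin n → A) → A, fun _ => Empty⟩

/-- The full clone structure `Ω(A)` on `A`. -/
instance OmegaStructure (A : Type*) : (LA A).Structure A :=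
  ⟨fun f x => f x, fun r => r.elim⟩

/-- The product `L_A`-structure on `I → A`, interpreted pointwise. -/
instance piStructure (A I : Type*) : (LA A).Structure (I → A) :=
  ⟨fun f x i => f fun k => x k i, fun r => r.elim⟩

/-!
Every map `A → A` is a unary symbol, so a substructure `B` of `I → A` is closed under
post-composition; since `f` factors through `g` exactly when `ker g ≤ ker f`, membership of `f`
in `B` depends only on `ker f`, and the kernels of members of `B` form an upward closed family.
It is also downward directed: if `A` is infinite, a bijection `A × A ≃ A` is a binary symbol
that pairs `g₁, g₂ ∈ B` into a member of `B` with kernel `ker g₁ ⊓ ker g₂`.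
-/

namespace LA

variable {A I : Type*} {B : (LA A).Substructure (I → A)}

theorem const_mem (B : (LA A).Substructure (I → A)) (a : A) : (fun _ => a) ∈ B :=
  B.fun_mem (n := 0) (fun _ => a) Fin.elim0 fun k => k.elim0

theorem comp_mem (φ : A → A) {g : I → A} (hg : g ∈ B) : φ ∘ g ∈ B :=
  B.fun_mem (n := 1) (fun x => φ (x 0)) ![g] fun k => by fin_cases k; exact hg

theorem comp₂_mem (φ : A → A → A) {g₁ g₂ : I → A} (hg₁ : g₁ ∈ B) (hg₂ : g₂ ∈ B) :
    (fun i => φ (g₁ i) (g₂ i)) ∈ B :=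
  B.fun_mem (n := 2) (fun x => φ (x 0) (x 1)) ![g₁, g₂] fun k => by
    fin_cases k
    exacts [hg₁, hg₂]

theorem mem_of_ker_le {f g : I → A} (hg : g ∈ B) (hle : Setoid.ker g ≤ Setoid.ker f) :
    f ∈ B := by
  have hfg : f.FactorsThrough g := fun _ _ h => hle h
  simpa [Function.comp_def, hfg.extend_apply] using comp_mem (Function.extend g f id) hg

theorem exists_mem_ker_eq_inf [Infinite A] {g₁ g₂ : I → A} (hg₁ : g₁ ∈ B) (hg₂ : g₂ ∈ B) :
    ∃ h ∈ B, Setoid.ker h = Setoid.ker g₁ ⊓ Setoid.ker g₂ := by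
  obtain ⟨e⟩ : Nonempty (A × A ≃ A) := Cardinal.eq.mp (by simp)
  refine ⟨_, comp₂_mem (fun a b => e (a, b)) hg₁ hg₂, ?_⟩
  ext i j
  simp [Setoid.ker_def, Setoid.inf_def]

def kerFilter [Infinite A] (B : (LA A).Substructure (I → A)) : Order.PFilter (Setoid I) :=
  Order.IsPFilter.toPFilter (F := {s | ∃ g ∈ B, Setoid.ker g ≤ s}) <| by
    refine .of_def ⟨_, _, const_mem B (Classical.arbitrary A), le_rfl⟩ ?_ ?_
    · rintro s ⟨g₁, hg₁, hs⟩ t ⟨g₂, hg₂, ht⟩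
      obtain ⟨h, hB, hker⟩ := exists_mem_ker_eq_inf hg₁ hg₂
      exact ⟨Setoid.ker h, ⟨h, hB, le_rfl⟩, hker ▸ inf_le_left.trans hs,
        hker ▸ inf_le_right.trans ht⟩
    · rintro s t hst ⟨g, hg, hs⟩
      exact ⟨g, hg, hs.trans hst⟩

theorem mem_kerFilter [Infinite A] {s : Setoid I} :
    s ∈ kerFilter B ↔ ∃ g ∈ B, Setoid.ker g ≤ s :=
  Iff.rfl

end LA

/-- Every `L_A`-substructure `B` of the product structure on `I → A` is of the
form `{f | Setoid.ker f ∈ F}` for some order filter `F` on the lattice `Setoid I`. -/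
theorem stmt_0 (A : Type*) [Infinite A] (I : Type*) (B : (LA A).Substructure (I → A)) :
    ∃ F : Order.PFilter (Setoid I), ∀ f : I → A, f ∈ B ↔ Setoid.ker f ∈ F := by
  refine ⟨LA.kerFilter B, fun f => ⟨fun hf => ?_, fun hf => ?_⟩⟩
  · exact LA.mem_kerFilter.2 ⟨f, hf, le_rfl⟩
  · obtain ⟨g, hg, hle⟩ := LA.mem_kerFilter.1 hf
    exact LA.mem_of_ker_le hg hle
end

section
/- Let F be an order filter on Setoid I and let f, g : I → A satisfy ker f ∈ F and ker g ∈ F. Then the equalizer {i ∈ I | f i = g i} belongs to 𝔅(F), i.e., it is either empty or an equivalence class of some member of F. -/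
/-! The equalizer is a union of classes of `ker f ⊓ ker g ∈ F`; merging those classes into one
and everything else into a second class gives a coarser relation, still in the upward closed `F`,
of which the equalizer (when nonempty) is a class. -/

/-- `𝔅(F)`: the collection of subsets of `I` consisting of `∅` together with every
equivalence class of every member of `F`. -/
def bAlg {I : Type*} (F : Set (Setoid I)) : Set (Set I) :=
  {R | R = ∅ ∨ ∃ s ∈ F, ∃ i : I, R = {j : I | s i j}}

namespace Setoid

variable {α β γ : Type*}

theorem ker_le_ker_comp (h : α → β) (φ : β → γ) : ker h ≤ ker (φ ∘ h) :=
  fun _ _ hxy => congrArg φ hxy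

theorem ker_inf_ker (f : α → β) (g : α → γ) : ker f ⊓ ker g = ker fun x => (f x, g x) := by
  ext x y
  simp only [inf_iff_and, ker_def, Prod.mk.injEq]

end Setoid

section bAlg

variable {I B : Type*} {F : Set (Setoid I)}

theorem preimage_singleton_mem_bAlg {c : I → B} (hc : Setoid.ker c ∈ F) (b : B) :
    c ⁻¹' {b} ∈ bAlg F := by
  rcases (c ⁻¹' {b}).eq_empty_or_nonempty with hempty | ⟨i, hi⟩
  · exact Or.inl hempty
  · refine Or.inr ⟨_, hc, i, ?_⟩
    ext j
    simp only [Set.mem_preimage, Set.mem_singleton_iff.mp hi, Set.mem_singleton_iff,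
      Set.mem_ofPred_eq, Setoid.ker_def, eq_comm]

theorem preimage_mem_bAlg (hF : IsUpperSet F) {h : I → B} (hh : Setoid.ker h ∈ F) (S : Set B) :
    h ⁻¹' S ∈ bAlg F := by
  have hmem : Setoid.ker (fun i => h i ∈ S) ∈ F := hF (Setoid.ker_le_ker_comp h (· ∈ S)) hh
  convert preimage_singleton_mem_bAlg hmem True using 1
  ext i
  simp

end bAlg

theorem stmt_2_general (A : Type*) (I : Type*) (F : Order.PFilter (Setoid I))
    (f g : I → A) (hf : Setoid.ker f ∈ F) (hg : Setoid.ker g ∈ F) :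
    {i : I | f i = g i} ∈ bAlg (F : Set (Setoid I)) := by
  have hpair : Setoid.ker (fun i => (f i, g i)) ∈ F :=
    Setoid.ker_inf_ker f g ▸ F.inf_mem hf hg
  exact preimage_mem_bAlg (fun _ _ hle hmem => F.mem_of_le hle hmem) hpair {p | p.1 = p.2}

/-- If `F` is an order filter on `Setoid I` and `ker f, ker g ∈ F`, then the
equalizer `{i | f i = g i}` belongs to `𝔅(F)`. -/
theorem stmt_2 (A : Type*) [Infinite A] (I : Type*) (F : Order.PFilter (Setoid I))
    (f g : I → A) (hf : Setoid.ker f ∈ F) (hg : Setoid.ker g ∈ F) :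
    {i : I | f i = g i} ∈ bAlg (F : Set (Setoid I)) :=
  stmt_2_general A I F f g hf hg
end

section
/- Let F be an order filter on Setoid I. Then 𝔅(F) is a Boolean subalgebra of the powerset of I: it contains ∅ and the whole set I, and it is closed under complementation, binary unions, and binary intersections. -/
namespace Setoid

variable {α β γ δ : Type*}

theorem le_ker_mem_setOf_rel (s : Setoid α) (i : α) : s ≤ ker (· ∈ {j | s i j}) :=
  fun _ _ h => propext ⟨fun hx => s.trans hx h, fun hy => s.trans hy (s.symm h)⟩

theorem setOf_ker_mem_rel_eq {U : Set α} {i : α} (hi : i ∈ U) : {j | ker (· ∈ U) i j} = U := by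
  ext j
  simp [ker_def, hi]

theorem ker_mem_compl (U : Set α) : ker (· ∈ Uᶜ) = ker (· ∈ U) := by
  ext x y
  simp only [ker_def, Set.mem_compl_iff, eq_iff_iff, not_iff_not]

theorem ker_inf_ker_le_ker_of_eq {f : α → β} {g : α → γ} {h : α → δ} (op : β → γ → δ)
    (hh : ∀ x, h x = op (f x) (g x)) : ker f ⊓ ker g ≤ ker h := by
  rintro x y ⟨hf, hg⟩
  simp only [ker_def] at hf hg ⊢
  rw [hh, hh, hf, hg]

theorem ker_mem_inf_ker_mem_le_ker_mem_union (U V : Set α) :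
    ker (· ∈ U) ⊓ ker (· ∈ V) ≤ ker (· ∈ U ∪ V) :=
  ker_inf_ker_le_ker_of_eq (· ∨ ·) fun _ => rfl

theorem ker_mem_inf_ker_mem_le_ker_mem_inter (U V : Set α) :
    ker (· ∈ U) ⊓ ker (· ∈ V) ≤ ker (· ∈ U ∩ V) :=
  ker_inf_ker_le_ker_of_eq (· ∧ ·) fun _ => rfl

end Setoid

theorem mem_bAlg_iff {I : Type*} {F : Order.PFilter (Setoid I)} {U : Set I} :
    U ∈ bAlg (F : Set (Setoid I)) ↔ Setoid.ker (· ∈ U) ∈ F := by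
  constructor
  · rintro (rfl | ⟨s, hs, i, rfl⟩)
    · exact F.mem_of_le (fun _ _ _ => rfl) F.top_mem
    · exact F.mem_of_le (s.le_ker_mem_setOf_rel i) hs
  · intro hU
    rcases U.eq_empty_or_nonempty with rfl | ⟨i, hi⟩
    · exact Or.inl rfl
    · exact Or.inr ⟨_, hU, i, (Setoid.setOf_ker_mem_rel_eq hi).symm⟩

/-- For an order filter `F` on `Setoid I`, `𝔅(F)` is a Boolean subalgebra of the
powerset of `I`: it contains `∅` and `I`, and is closed under complements, unions and
intersections. -/
theorem stmt_3 (I : Type*) (F : Order.PFilter (Setoid I)) :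
    ∅ ∈ bAlg (F : Set (Setoid I)) ∧
    (Set.univ : Set I) ∈ bAlg (F : Set (Setoid I)) ∧
    (∀ R ∈ bAlg (F : Set (Setoid I)), Rᶜ ∈ bAlg (F : Set (Setoid I))) ∧
    (∀ R ∈ bAlg (F : Set (Setoid I)), ∀ S ∈ bAlg (F : Set (Setoid I)),
      R ∪ S ∈ bAlg (F : Set (Setoid I))) ∧
    (∀ R ∈ bAlg (F : Set (Setoid I)), ∀ S ∈ bAlg (F : Set (Setoid I)),
      R ∩ S ∈ bAlg (F : Set (Setoid I))) := by
  have empty_mem : ∅ ∈ bAlg (F : Set (Setoid I)) := Or.inl rfl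
  have compl_mem : ∀ R ∈ bAlg (F : Set (Setoid I)), Rᶜ ∈ bAlg (F : Set (Setoid I)) := by
    intro R hR
    rwa [mem_bAlg_iff, Setoid.ker_mem_compl, ← mem_bAlg_iff]
  refine ⟨empty_mem, Set.compl_empty ▸ compl_mem ∅ empty_mem, compl_mem, ?_, ?_⟩
  · intro R hR S hS
    rw [mem_bAlg_iff] at hR hS ⊢
    exact F.mem_of_le (Setoid.ker_mem_inf_ker_mem_le_ker_mem_union R S) (F.inf_mem hR hS)
  · intro R hR S hS
    rw [mem_bAlg_iff] at hR hS ⊢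
    exact F.mem_of_le (Setoid.ker_mem_inf_ker_mem_le_ker_mem_inter R S) (F.inf_mem hR hS)
end

section
/- Let F be an order filter on Setoid I and let Z ⊆ 𝔅(F) satisfy: the whole set I belongs to Z, Z is closed under binary intersections, and Z is upward closed within 𝔅(F). Then the relation θ on Ω(A)^F = {f : I → A | ker f ∈ F} defined by θ f g ↔ {i ∈ I | f i = g i} ∈ Z is a congruence on Ω(A)^F, i.e., an equivalence relation compatible with all the L_A-operations. -/
/-! The equality set `{i | f i = g i}` of two functions with kernels in `F` is a union of classes
of `ker f ⊓ ker g ∈ F`; collapsing it to a single class gives a coarser setoid, still in `F`, of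
which it is a class, so it lies in `𝔅(F)`. Each congruence condition then asks that some equality
set lie in `Z`, and that set contains a finite intersection of equality sets already in `Z`. -/

theorem FiniteInter.iInter_mem {α ι : Type*} [Finite ι] {S : Set (Set α)} (hS : FiniteInter S)
    {E : ι → Set α} (hE : ∀ k, E k ∈ S) : ⋂ k, E k ∈ S := by
  have := hS.finiteInter_mem (Set.finite_range E).toFinset
    (by simpa [Set.range_subset_iff] using hE)
  simpa [Set.sInter_range] using this

theorem Setoid.exists_le_setOf_rel_eq {I : Type*} (s : Setoid I) {E : Set I}
    (hE : ∀ i j, s i j → (i ∈ E ↔ j ∈ E)) {i₀ : I} (hi₀ : i₀ ∈ E) :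
    ∃ t : Setoid I, s ≤ t ∧ {j | t i₀ j} = E := by
  classical
  refine ⟨Setoid.ker fun i => if i ∈ E then none else some (Quotient.mk s i), ?_, ?_⟩
  · intro i j hij
    by_cases hi : i ∈ E
    · simp [hi, (hE i j hij).1 hi]
    · simp [hi, mt (hE i j hij).2 hi, Quotient.sound hij]
  · ext j
    by_cases hj : j ∈ E <;> simp [hi₀, hj]

theorem mem_bAlg_of_saturated {I : Type*} (F : Order.PFilter (Setoid I)) {s : Setoid I}
    (hs : s ∈ F) {E : Set I} (hE : ∀ i j, s i j → (i ∈ E ↔ j ∈ E)) :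
    E ∈ bAlg (F : Set (Setoid I)) := by
  rcases E.eq_empty_or_nonempty with rfl | ⟨i₀, hi₀⟩
  · exact Or.inl rfl
  · obtain ⟨t, hst, hEt⟩ := s.exists_le_setOf_rel_eq hE hi₀
    exact Or.inr ⟨t, F.mem_of_le hst hs, i₀, hEt.symm⟩

theorem setOf_eq_mem_bAlg {A I : Type*} (F : Order.PFilter (Setoid I)) {f g : I → A}
    (hf : Setoid.ker f ∈ F) (hg : Setoid.ker g ∈ F) :
    {i | f i = g i} ∈ bAlg (F : Set (Setoid I)) := by
  refine mem_bAlg_of_saturated F (Order.PFilter.inf_mem hf hg) fun i j hij => ?_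
  obtain ⟨hfij, hgij⟩ := Setoid.inf_iff_and.mp hij
  simp only [Set.mem_ofPred_eq, Setoid.ker_def.mp hfij, Setoid.ker_def.mp hgij]

theorem stmt_5_general (A : Type*) (I : Type*) (F : Order.PFilter (Setoid I))
    (Z : Set (Set I))
    (hZuniv : (Set.univ : Set I) ∈ Z)
    (hZinter : ∀ R ∈ Z, ∀ S ∈ Z, R ∩ S ∈ Z)
    (hZup : ∀ R ∈ Z, ∀ S ∈ bAlg (F : Set (Setoid I)), R ⊆ S → S ∈ Z)
    (θ : {f : I → A // Setoid.ker f ∈ F} → {f : I → A // Setoid.ker f ∈ F} → Prop)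
    (hθ : ∀ f g : {f : I → A // Setoid.ker f ∈ F},
      θ f g ↔ {i : I | f.1 i = g.1 i} ∈ Z) :
    Equivalence θ ∧
    ∀ (n : ℕ) (g : (Fin n → A) → A)
      (u v : Fin n → {f : I → A // Setoid.ker f ∈ F})
      (hu : Setoid.ker (fun i : I => g fun k => (u k).1 i) ∈ F)
      (hv : Setoid.ker (fun i : I => g fun k => (v k).1 i) ∈ F),
      (∀ k, θ (u k) (v k)) → θ ⟨fun i => g fun k => (u k).1 i, hu⟩
        ⟨fun i => g fun k => (v k).1 i, hv⟩ := by
  have hZ : FiniteInter Z := ⟨hZuniv, fun _ hR _ hS => hZinter _ hR _ hS⟩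
  refine ⟨⟨fun f => ?_, fun {f g} hfg => ?_, fun {f g h} hfg hgh => ?_⟩,
    fun n g u v hu hv huv => ?_⟩
  · simpa [hθ] using hZuniv
  · rw [hθ] at hfg ⊢
    simpa only [eq_comm] using hfg
  · rw [hθ] at hfg hgh ⊢
    exact hZup _ (hZinter _ hfg _ hgh) _ (setOf_eq_mem_bAlg F f.2 h.2)
      fun i hi => hi.1.trans hi.2
  · rw [hθ]
    refine hZup _ (hZ.iInter_mem fun k => (hθ _ _).1 (huv k)) _ (setOf_eq_mem_bAlg F hu hv) ?_
    intro i hi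
    simp only [Set.mem_iInter, Set.mem_ofPred_eq] at hi ⊢
    exact congrArg g (funext hi)

/-- Let `F` be an order filter on `Setoid I` and let `Z ⊆ 𝔅(F)` contain the whole
set `I`, be closed under binary intersections, and be upward closed within `𝔅(F)`.  Then the
relation `θ` on `Ω(A)^F = {f : I → A | ker f ∈ F}` defined by `θ f g ↔ {i | f i = g i} ∈ Z`
is a congruence: an equivalence relation compatible with all the pointwise `L_A`-operations. -/
theorem stmt_5 (A : Type*) [Infinite A] (I : Type*) (F : Order.PFilter (Setoid I))
    (Z : Set (Set I)) (hZB : Z ⊆ bAlg (F : Set (Setoid I)))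
    (hZuniv : (Set.univ : Set I) ∈ Z)
    (hZinter : ∀ R ∈ Z, ∀ S ∈ Z, R ∩ S ∈ Z)
    (hZup : ∀ R ∈ Z, ∀ S ∈ bAlg (F : Set (Setoid I)), R ⊆ S → S ∈ Z)
    (θ : {f : I → A // Setoid.ker f ∈ F} → {f : I → A // Setoid.ker f ∈ F} → Prop)
    (hθ : ∀ f g : {f : I → A // Setoid.ker f ∈ F},
      θ f g ↔ {i : I | f.1 i = g.1 i} ∈ Z) :
    Equivalence θ ∧
    ∀ (n : ℕ) (g : (Fin n → A) → A)
      (u v : Fin n → {f : I → A // Setoid.ker f ∈ F})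
      (hu : Setoid.ker (fun i : I => g fun k => (u k).1 i) ∈ F)
      (hv : Setoid.ker (fun i : I => g fun k => (v k).1 i) ∈ F),
      (∀ k, θ (u k) (v k)) → θ ⟨fun i => g fun k => (u k).1 i, hu⟩
        ⟨fun i => g fun k => (v k).1 i, hv⟩ :=
  stmt_5_general A I F Z hZuniv hZinter hZup θ hθ
end

section
/- Let M₁ and M₂ be clone-compatible L_A-structures, each having at least two elements. Then the product L_A-structure M₁ × M₂ (with function symbols interpreted coordinatewise) is not elementarily equivalent to Ω(A). -/
/-! In `Ω(A)` one binary operation `d` returns its first argument when that argument equals a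
fixed constant `c`, and its second argument otherwise; this is a first-order sentence. It fails in a
product of two nontrivial structures: with `m ≠ c₂` and `b ≠ c₁`, the first coordinate of
`d (c₁, m) (b, m)` must be `b` since `(c₁, m) ≠ c`, and that of `d c (b, m)` must be `c₁`, yet both
are the value of the first factor's `d` at `(c₁, b)`. -/

open FirstOrder Language

/-- The product structure on `M × N`, with function symbols interpreted coordinatewise. -/
instance prodStructure (L : FirstOrder.Language) (M N : Type*) [L.Structure M] [L.Structure N] :
    L.Structure (M × N) where
  funMap f x := (Structure.funMap f fun k => (x k).1, Structure.funMap f fun k => (x k).2)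
  RelMap r x := Structure.RelMap r (fun k => (x k).1) ∧ Structure.RelMap r fun k => (x k).2

/-- A structure for the language `L_A` is clone-compatible if the interpretations of
projections act as projections and the interpretation of a composite function is the composite
of the interpretations. -/
def CloneCompatible (A M : Type*) [(LA A).Structure M] : Prop :=
  (∀ (n : ℕ) (k : Fin n) (x : Fin n → M),
    Structure.funMap (L := LA A) (fun v : Fin n → A => v k) x = x k) ∧
  (∀ (n m : ℕ) (g : (Fin n → A) → A) (h : Fin n → ((Fin m → A) → A)) (x : Fin m → M),
    Structure.funMap (L := LA A) (fun v : Fin m → A => g fun k => h k v) x =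
      Structure.funMap (L := LA A) g fun k => Structure.funMap (L := LA A) (h k) x)

section Switch

variable {L : FirstOrder.Language} (c : L.Constants) (d : L.Functions 2)

def switchSentence : L.Sentence :=
  ∀' ∀' (((&0 =' c.term) ⟹ (d.apply₂ &0 &1 =' &0)) ⊓ (∼(&0 =' c.term) ⟹ (d.apply₂ &0 &1 =' &1)))

theorem realize_switchSentence {M : Type*} [L.Structure M] [DecidableEq M] :
    M ⊨ switchSentence c d ↔ ∀ x y : M, Structure.funMap d ![x, y] = if x = c then x else y := by
  simp only [switchSentence, Sentence.Realize, Formula.Realize, BoundedFormula.realize_all,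
    BoundedFormula.realize_inf, BoundedFormula.realize_imp, BoundedFormula.realize_not,
    BoundedFormula.realize_bdEqual, Term.realize_functions_apply₂, Term.realize_constants]
  refine forall₂_congr fun x y => ?_
  by_cases hx : x = c <;> simp [Fin.snoc, hx]

theorem fst_funMap_prod_congr {M₁ M₂ : Type*} [L.Structure M₁] [L.Structure M₂] {n : ℕ}
    (f : L.Functions n) {x x' : Fin n → M₁ × M₂} (h : ∀ k, (x k).1 = (x' k).1) :
    (Structure.funMap f x).1 = (Structure.funMap f x').1 :=
  congrArg (Structure.funMap f) (funext h)

theorem not_realize_switchSentence_prod {M₁ M₂ : Type*} [L.Structure M₁] [L.Structure M₂]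
    [Nontrivial M₁] [Nontrivial M₂] : ¬ (M₁ × M₂) ⊨ switchSentence c d := by
  classical
  rw [realize_switchSentence]
  intro hd
  set e : M₁ × M₂ := (c : M₁ × M₂)
  obtain ⟨m, hm⟩ := exists_ne e.2
  obtain ⟨b, hb⟩ := exists_ne e.1
  have hx : ((e.1, m) : M₁ × M₂) ≠ e := fun h => hm (congrArg Prod.snd h)
  have h_second : (Structure.funMap d ![(e.1, m), (b, m)]).1 = b := by
    simpa [if_neg hx] using congrArg Prod.fst (hd (e.1, m) (b, m))
  have h_first : (Structure.funMap d ![e, (b, m)]).1 = e.1 := by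
    simpa using congrArg Prod.fst (hd e (b, m))
  have h_same : (Structure.funMap d ![(e.1, m), (b, m)]).1 = (Structure.funMap d ![e, (b, m)]).1 :=
    fst_funMap_prod_congr d (Fin.forall_fin_two.2 ⟨rfl, rfl⟩)
  exact hb (h_second.symm.trans (h_same.trans h_first))

end Switch

theorem realize_switchSentence_omega {A : Type*} [DecidableEq A] (a : A) :
    A ⊨ switchSentence (L := LA A) (fun _ => a) (fun v => if v 0 = a then v 0 else v 1) :=
  (realize_switchSentence _ _).2 fun _ _ => rfl

theorem stmt_6_general (A : Type*) (M₁ M₂ : Type*)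
    [(LA A).Structure M₁] [(LA A).Structure M₂]
    [Nontrivial M₁] [Nontrivial M₂] :
    ¬ (M₁ × M₂ ≅[LA A] A) := by
  classical
  intro h
  obtain ⟨a⟩ := h.nonempty
  exact not_realize_switchSentence_prod _ _
    ((h.realize_sentence _).2 (realize_switchSentence_omega a))

/-- If `M₁` and `M₂` are clone-compatible `L_A`-structures, each with at least two
elements, then the product structure `M₁ × M₂` is not elementarily equivalent to `Ω(A)`. -/
theorem stmt_6 (A : Type*) [Infinite A] (M₁ M₂ : Type*)
    [(LA A).Structure M₁] [(LA A).Structure M₂]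
    (h₁ : CloneCompatible A M₁) (h₂ : CloneCompatible A M₂)
    [Nontrivial M₁] [Nontrivial M₂] :
    ¬ (M₁ × M₂ ≅[LA A] A) :=
  stmt_6_general A M₁ M₂
end

section
/- Let U be an ultrafilter on a set I and let B be an L_A-substructure of the product L_A-structure on I → A. Then the image of B under the canonical quotient map from I → A to the ultrapower ∏_U A is closed under all L_A-operations of ∏_U A, and the induced substructure on this image is an elementary substructure of ∏_U A: every first-order L_A-formula with parameters from the image is satisfied in ∏_U A if and only if it is satisfied in the induced substructure. -/
open FirstOrder Language

/-! Tarski–Vaught test. If a formula with parameters `[b k]`, `b k ∈ B`, has a witness `[g]` in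
the ultrapower, then by Łoś it has the witness `g i` in `A` at the parameters `b k i` for
`U`-almost every `i`. Every function `(Fin n → A) → A` is a function symbol of `L_A`, in particular
a Skolem function for the formula; applied to `b` in `I → A` it gives a witness lying in `B`. -/

open Structure

namespace FirstOrder.Language.Ultraproduct

variable {L : Language} {I : Type*} {M : I → Type*} [∀ i, L.Structure (M i)]
  [∀ i, Nonempty (M i)] {U : Ultrafilter I}

theorem realize_snoc_cast_iff {n : ℕ} (φ : L.BoundedFormula Empty (n + 1))
    (v : Fin n → ∀ i, M i) (m : ∀ i, M i) :
    φ.Realize default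
        (Fin.snoc (fun k => (v k : (U : Filter I).Product M)) (m : (U : Filter I).Product M)) ↔
      ∀ᶠ i in U, φ.Realize default (Fin.snoc (fun k => v k i) (m i)) := by
  convert boundedFormula_realize_cast (u := U) φ default (Fin.snoc v m) using 1
  · refine iff_of_eq ?_
    congr 1
    · exact Subsingleton.elim _ _
    · exact (Fin.comp_snoc ((↑) : (∀ i, M i) → (U : Filter I).Product M) v m).symm
  · refine Filter.eventually_congr (.of_forall fun i => iff_of_eq ?_)
    congr 1
    · exact Subsingleton.elim _ _
    · exact (Fin.comp_snoc (fun x : ∀ i, M i => x i) v m).symm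

end FirstOrder.Language.Ultraproduct

namespace LA

def ultraproductMk (A : Type*) {I : Type*} (U : Ultrafilter I) :
    (I → A) →[LA A] (U : Filter I).Product fun _ : I => A where
  toFun f := f
  map_fun' f x := (Ultraproduct.funMap_cast f x).symm

theorem exists_mem_realize_snoc_cast {A I : Type*} {U : Ultrafilter I}
    (B : (LA A).Substructure (I → A)) {n : ℕ} (φ : (LA A).BoundedFormula Empty (n + 1))
    {b : Fin n → I → A} (hb : ∀ k, b k ∈ B) (g : I → A)
    (h : φ.Realize default (Fin.snoc (fun k => (b k : (U : Filter I).Product fun _ : I => A))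
      (g : (U : Filter I).Product fun _ : I => A))) :
    ∃ c ∈ B, φ.Realize default (Fin.snoc (fun k => (b k : (U : Filter I).Product fun _ : I => A))
      (c : (U : Filter I).Product fun _ : I => A)) := by
  have : Nonempty A := ⟨g (U : Filter I).nonempty_of_neBot.some⟩
  let skolem : (Fin n → A) → A := fun y =>
    Classical.epsilon fun c => φ.Realize default (Fin.snoc y c)
  refine ⟨funMap (L := LA A) skolem b, B.fun_mem _ b hb, ?_⟩
  rw [Ultraproduct.realize_snoc_cast_iff] at *
  filter_upwards [h] with i hi
  exact Classical.epsilon_spec (p := fun c => φ.Realize default (Fin.snoc _ c)) ⟨g i, hi⟩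

end LA

theorem stmt_7_general (A : Type*) (I : Type*) (U : Ultrafilter I)
    (B : (LA A).Substructure (I → A)) :
    ∃ S : (LA A).Substructure ((U : Filter I).Product fun _ : I => A),
      (S : Set ((U : Filter I).Product fun _ : I => A)) =
        (fun f : I → A => (↑f : (U : Filter I).Product fun _ : I => A)) '' (B : Set (I → A)) ∧
      S.IsElementary := by
  refine ⟨B.map (LA.ultraproductMk A U), rfl, Substructure.isElementary_of_exists _ ?_⟩
  intro n φ x a h
  choose b hbB hb using fun k => (x k).2
  obtain ⟨g, rfl⟩ := Quotient.exists_rep a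
  have hx : Subtype.val ∘ x = fun k => (b k : (U : Filter I).Product fun _ : I => A) :=
    funext fun k => (hb k).symm
  rw [hx] at h ⊢
  obtain ⟨c, hcB, hc⟩ := LA.exists_mem_realize_snoc_cast B φ hbB g h
  exact ⟨⟨_, Substructure.mem_map_of_mem (LA.ultraproductMk A U) hcB⟩, hc⟩

/-- Let `U` be an ultrafilter on `I` and let `B` be an `L_A`-substructure of the
product structure on `I → A`.  Then the image of `B` under the canonical quotient map to the
ultrapower `∏_U A` is (the underlying set of) a substructure of `∏_U A`, and this substructure
is elementary: every first-order `L_A`-formula with parameters from the image holds in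
`∏_U A` iff it holds in the induced substructure. -/
theorem stmt_7 (A : Type*) [Infinite A] (I : Type*) (U : Ultrafilter I)
    (B : (LA A).Substructure (I → A)) :
    ∃ S : (LA A).Substructure ((U : Filter I).Product fun _ : I => A),
      (S : Set ((U : Filter I).Product fun _ : I => A)) =
        (fun f : I → A => (↑f : (U : Filter I).Product fun _ : I => A)) '' (B : Set (I → A)) ∧
      S.IsElementary :=
  stmt_7_general A I U B
end

section
/- Let I be a set and consider the product L_A-structure on functions (I → A) → A (the product of copies of Ω(A) indexed by I → A). Then the L_A-substructure generated by the set of projections {π_i | i ∈ I}, where π_i x = x i, has underlying set exactly the set of finitely determined functions: a function g : (I → A) → A lies in the substructure generated by the projections if and only if there is a finite set s ⊆ I such that g x = g y whenever x and y agree on s. -/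
/-!
A function of `x : I → A` built by applying operations to projections depends on the finitely many
coordinates of the projections involved, and finitely determined functions are closed under the
operations, so the closure of the projections is contained in them. Conversely, if `g` depends only
on the coordinates in a finite `s = {e 0, …, e (n-1)}`, then `g` factors as `F (x ∘ e)` for some
`F : (Fin n → A) → A`, which is an `n`-ary symbol of `L_A`; so `g` is that symbol applied to the
projections `π_{e k}`.
-/

open FirstOrder Language

section FinitelyDetermined

variable {I A B : Type*}

def FinitelyDetermined (g : (I → A) → B) : Prop :=
  ∃ s : Finset I, ∀ x y : I → A, (∀ i ∈ s, x i = y i) → g x = g y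

theorem finitelyDetermined_eval (i : I) : FinitelyDetermined fun x : I → A => x i :=
  ⟨{i}, fun _ _ h => h i (Finset.mem_singleton_self i)⟩

theorem FinitelyDetermined.comp_pi {ι C : Type*} [Fintype ι] {p : ι → (I → A) → B}
    (hp : ∀ k, FinitelyDetermined (p k)) (F : (ι → B) → C) :
    FinitelyDetermined fun x => F fun k => p k x := by
  classical
  choose s hs using hp
  refine ⟨Finset.univ.biUnion s, fun x y hxy => congrArg F (funext fun k => ?_)⟩
  exact hs k x y fun i hi => hxy i (Finset.mem_biUnion.mpr ⟨k, Finset.mem_univ k, hi⟩)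

theorem FinitelyDetermined.exists_eq_comp [Nonempty B] {g : (I → A) → B}
    (hg : FinitelyDetermined g) :
    ∃ (n : ℕ) (e : Fin n → I) (F : (Fin n → A) → B), ∀ x, g x = F fun k => x (e k) := by
  obtain ⟨s, hs⟩ := hg
  let e : Fin s.card → I := fun k => s.equivFin.symm k
  let restrict : (I → A) → Fin s.card → A := fun x k => x (e k)
  have hfactor : g.FactorsThrough restrict := fun x y hxy =>
    hs x y fun i hi => by simpa [restrict, e] using congrFun hxy (s.equivFin ⟨i, hi⟩)
  exact ⟨s.card, e, Function.extend restrict g fun _ => Classical.arbitrary B,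
    fun x => (hfactor.extend_apply _ x).symm⟩

end FinitelyDetermined

section Projections

variable (A I : Type*)

def projections : Set ((I → A) → A) := {p | ∃ i : I, p = fun x : I → A => x i}

def finitelyDeterminedSubstructure : (LA A).Substructure ((I → A) → A) where
  carrier := {g | FinitelyDetermined g}
  fun_mem f _ hp := FinitelyDetermined.comp_pi hp f

theorem closure_projections_le :
    Substructure.closure (LA A) (projections A I) ≤ finitelyDeterminedSubstructure A I :=
  Substructure.closure_le.mpr <| by
    rintro _ ⟨i, rfl⟩
    exact finitelyDetermined_eval i

variable {A I}

theorem FinitelyDetermined.mem_closure_projections [Nonempty A] {g : (I → A) → A}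
    (hg : FinitelyDetermined g) : g ∈ Substructure.closure (LA A) (projections A I) := by
  obtain ⟨n, e, F, hF⟩ := hg.exists_eq_comp
  have hg_eq : g = Structure.funMap (L := LA A) F fun k x => x (e k) := funext hF
  rw [hg_eq]
  exact Substructure.fun_mem (L := LA A) _ F _ fun k => Substructure.subset_closure ⟨e k, rfl⟩
end Projections

/-- In the product `L_A`-structure on `(I → A) → A` (product of copies of `Ω(A)`
indexed by `I → A`), the substructure generated by the projections `π_i : x ↦ x i` consists
exactly of the finitely determined functions. -/
theorem stmt_9 (A : Type*) [Infinite A] (I : Type*) (g : (I → A) → A) :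
    g ∈ Substructure.closure (LA A)
        {p : (I → A) → A | ∃ i : I, p = fun x : I → A => x i} ↔
      ∃ s : Finset I, ∀ x y : I → A, (∀ i ∈ s, x i = y i) → g x = g y :=
  ⟨fun hg => closure_projections_le A I hg, FinitelyDetermined.mem_closure_projections⟩
end

section
/- Let M be a clone-compatible L_A-structure and let α : I → M. Then there is exactly one function φ : F(A,I) → M such that φ(π_i) = α i for every i ∈ I, and φ commutes with all L_A-operations: for every n, every g : (Fin n → A) → A, and every ℓ : Fin n → F(A,I), φ (fun x => g (fun k => ℓ k x)) equals the interpretation in M of g applied to fun k => φ (ℓ k). -/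
open FirstOrder Language

/-- `F(A,I)`: the set of finitely determined functions `(I → A) → A`. -/
def FinDet (A I : Type*) : Set ((I → A) → A) :=
  {g | ∃ s : Finset I, ∀ x y : I → A, (∀ i ∈ s, x i = y i) → g x = g y}

/-- Each projection `π_i` is finitely determined. -/
theorem projMem (A : Type*) {I : Type*} (i : I) : (fun x : I → A => x i) ∈ FinDet A I :=
  ⟨{i}, fun _ _ h => h i (Finset.mem_singleton_self i)⟩

/-- `φ : F(A,I) → M` sends each projection to `α i` and commutes with all `L_A`-operations. -/
def IsPhi {A I M : Type*} [(LA A).Structure M] (α : I → M) (φ : FinDet A I → M) : Prop :=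
  (∀ i : I, φ ⟨fun x => x i, projMem A i⟩ = α i) ∧
  ∀ (n : ℕ) (g : (Fin n → A) → A) (ℓ : Fin n → FinDet A I)
    (h : (fun x : I → A => g fun k => (ℓ k).1 x) ∈ FinDet A I),
    φ ⟨fun x : I → A => g fun k => (ℓ k).1 x, h⟩ =
      Structure.funMap (L := LA A) g fun k => φ (ℓ k)

/-! A finitely determined `g`, determined by a finite `s ⊆ I`, is a finitary operation
`g_s : A^s → A` applied to the projections `π_i`, `i ∈ s`. Any `φ` as in the theorem must
therefore send `g` to the interpretation of `g_s` at `(α i)_{i ∈ s}`, which gives uniqueness.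
Clone compatibility makes this value independent of `s` (compare `s` and `t` with `s ∪ t`;
enlarging `s` only reindexes variables, which clone compatibility expresses through
projections), so the formula defines `φ`; it commutes with the operations because finitely many
arguments have a common determining set. -/

section FiniteSupport

variable {A I : Type*}

def DeterminedBy (s : Finset I) (g : (I → A) → A) : Prop :=
  ∀ x y : I → A, (∀ i ∈ s, x i = y i) → g x = g y

theorem DeterminedBy.mono {s t : Finset I} {g : (I → A) → A} (hs : DeterminedBy s g)
    (hst : s ⊆ t) : DeterminedBy t g :=
  fun x y hxy => hs x y fun i hi => hxy i (hst hi)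

theorem DeterminedBy.comp {n : ℕ} {s : Finset I} (g : (Fin n → A) → A)
    {ℓ : Fin n → (I → A) → A} (hℓ : ∀ k, DeterminedBy s (ℓ k)) :
    DeterminedBy s fun x => g fun k => ℓ k x :=
  fun x y hxy => congrArg g (funext fun k => hℓ k x y hxy)

noncomputable def enum (s : Finset I) : Fin s.card → I :=
  fun k => s.equivFin.symm k

theorem enum_injective (s : Finset I) : Function.Injective (enum s) :=
  Subtype.val_injective.comp s.equivFin.symm.injective

theorem exists_enum_comp_eq {s t : Finset I} (hst : s ⊆ t) :
    ∃ σ : Fin s.card → Fin t.card, enum t ∘ σ = enum s :=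
  ⟨fun k => t.equivFin ⟨enum s k, hst (s.equivFin.symm k).2⟩, funext fun k => by simp [enum]⟩

variable [Nonempty A]

/-- The arguments outside `s` are filled with junk; this is harmless when `s` determines `g`. -/
noncomputable def finitaryTrace (s : Finset I) (g : (I → A) → A) : (Fin s.card → A) → A :=
  fun v => g (Function.extend (enum s) v fun _ => Classical.arbitrary A)

theorem finitaryTrace_comp_enum {s : Finset I} {g : (I → A) → A} (hs : DeterminedBy s g)
    (x : I → A) : finitaryTrace s g (x ∘ enum s) = g x := by
  refine hs _ _ fun i hi => ?_
  obtain ⟨k, rfl⟩ : ∃ k, enum s k = i := ⟨s.equivFin ⟨i, hi⟩, by simp [enum]⟩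
  exact (enum_injective s).extend_apply _ _ k

theorem finitaryTrace_proj (s : Finset I) (k : Fin s.card) :
    finitaryTrace s (fun x : I → A => x (enum s k)) = fun v => v k :=
  funext fun v => (enum_injective s).extend_apply v (fun _ => Classical.arbitrary A) k

theorem finitaryTrace_reindex {s t : Finset I} {g : (I → A) → A} (hs : DeterminedBy s g)
    {σ : Fin s.card → Fin t.card} (hσ : enum t ∘ σ = enum s) :
    finitaryTrace t g = fun v => finitaryTrace s g (v ∘ σ) := by
  funext v
  refine hs _ _ fun i hi => ?_
  obtain ⟨k, rfl⟩ : ∃ k, enum s k = i := ⟨s.equivFin ⟨i, hi⟩, by simp [enum]⟩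
  rw [(enum_injective s).extend_apply, ← hσ, Function.comp_apply,
    (enum_injective t).extend_apply, Function.comp_apply]

end FiniteSupport

namespace CloneCompatible

variable {A M : Type*} [(LA A).Structure M]

theorem funMap_comp_reindex (hM : CloneCompatible A M) {n m : ℕ} (f : (Fin n → A) → A)
    (σ : Fin n → Fin m) (x : Fin m → M) :
    Structure.funMap (L := LA A) (fun v : Fin m → A => f (v ∘ σ)) x =
      Structure.funMap (L := LA A) f (x ∘ σ) := by
  have := hM.2 n m f (fun k v => v (σ k)) x
  simp only [hM.1] at this
  exact this

end CloneCompatible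

section Extension

variable {A I M : Type*} [Nonempty A] [(LA A).Structure M]

/-- The value forced on `g` by `α` when `g` is read as a function of the variables in `s`. -/
noncomputable def interpOn (α : I → M) (s : Finset I) (g : (I → A) → A) : M :=
  Structure.funMap (L := LA A) (finitaryTrace s g) (α ∘ enum s)

theorem interpOn_proj (hM : CloneCompatible A M) (α : I → M) (s : Finset I) (k : Fin s.card) :
    interpOn α s (fun x : I → A => x (enum s k)) = α (enum s k) := by
  rw [interpOn, finitaryTrace_proj, hM.1]
  rfl

theorem interpOn_comp (hM : CloneCompatible A M) (α : I → M) (s : Finset I) {n : ℕ}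
    (g : (Fin n → A) → A) (ℓ : Fin n → (I → A) → A) :
    interpOn α s (fun x => g fun k => ℓ k x) =
      Structure.funMap (L := LA A) g fun k => interpOn α s (ℓ k) :=
  hM.2 n s.card g (fun k => finitaryTrace s (ℓ k)) (α ∘ enum s)

theorem interpOn_mono (hM : CloneCompatible A M) (α : I → M) {s t : Finset I} (hst : s ⊆ t)
    {g : (I → A) → A} (hs : DeterminedBy s g) : interpOn α s g = interpOn α t g := by
  obtain ⟨σ, hσ⟩ := exists_enum_comp_eq hst
  rw [interpOn, interpOn, finitaryTrace_reindex hs hσ, hM.funMap_comp_reindex,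
    Function.comp_assoc, hσ]

theorem interpOn_congr (hM : CloneCompatible A M) (α : I → M) {s t : Finset I}
    {g : (I → A) → A} (hs : DeterminedBy s g) (ht : DeterminedBy t g) :
    interpOn α s g = interpOn α t g := by
  classical
  exact (interpOn_mono hM α Finset.subset_union_left hs).trans
    (interpOn_mono hM α Finset.subset_union_right ht).symm

noncomputable def extension (α : I → M) (g : FinDet A I) : M :=
  interpOn α (Classical.choose g.2) g.1

theorem extension_eq (hM : CloneCompatible A M) (α : I → M) (g : FinDet A I) {s : Finset I}
    (hs : DeterminedBy s g.1) : extension α g = interpOn α s g.1 :=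
  interpOn_congr hM α (Classical.choose_spec g.2) hs

theorem IsPhi.apply_eq {α : I → M} {φ : FinDet A I → M} (hφ : IsPhi α φ) (g : FinDet A I)
    {s : Finset I} (hs : DeterminedBy s g.1) : φ g = interpOn α s g.1 := by
  have hg : (fun x : I → A => finitaryTrace s g.1 fun k => x (enum s k)) = g.1 :=
    funext (finitaryTrace_comp_enum hs)
  have hmem : (fun x : I → A => finitaryTrace s g.1 fun k => x (enum s k)) ∈ FinDet A I :=
    hg.symm ▸ g.2
  have := hφ.2 s.card (finitaryTrace s g.1) (fun k => ⟨_, projMem A (enum s k)⟩) hmem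
  rw [show (⟨_, hmem⟩ : FinDet A I) = g from Subtype.ext hg, funext fun _ => hφ.1 _] at this
  exact this

theorem isPhi_extension (hM : CloneCompatible A M) (α : I → M) :
    IsPhi α (extension (A := A) α) := by
  classical
  refine ⟨fun i => ?_, fun n g ℓ _ => ?_⟩
  · set k := ({i} : Finset I).equivFin ⟨i, Finset.mem_singleton_self i⟩
    have hk : enum {i} k = i := by simp [k, enum]
    have hproj := interpOn_proj hM α {i} k
    rw [hk] at hproj
    rw [extension_eq hM α _ fun x y hxy => hxy i (Finset.mem_singleton_self i), hproj]
  · let supp k := Classical.choose (ℓ k).2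
    let u := Finset.univ.biUnion supp
    have hℓ : ∀ k, DeterminedBy u (ℓ k).1 := fun k =>
      DeterminedBy.mono (Classical.choose_spec (ℓ k).2)
        (Finset.subset_biUnion_of_mem supp (Finset.mem_univ k))
    rw [extension_eq hM α _ (DeterminedBy.comp g hℓ), interpOn_comp hM α u g _]
    simp only [extension_eq hM α _ (hℓ _)]

end Extension

/-- If `M` is a clone-compatible `L_A`-structure and `α : I → M`, then there is
exactly one map `φ : F(A,I) → M` sending each projection `π_i` to `α i` and commuting with all
the `L_A`-operations. -/
theorem stmt_10 (A : Type*) [Infinite A] (I M : Type*) [(LA A).Structure M]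
    (hM : CloneCompatible A M) (α : I → M) :
    ∃! φ : FinDet A I → M, IsPhi α φ :=
  ⟨extension α, isPhi_extension hM α, fun _ hφ =>
    funext fun g => hφ.apply_eq g (Classical.choose_spec g.2)⟩
end

section
/- Equip A with the discrete uniformity and I → A with the product uniformity. Then a function g : (I → A) → A is uniformly continuous if and only if g is finitely determined, i.e., there exists a finite set s ⊆ I such that g x = g y whenever x and y agree on s. -/
/-!
The product of discrete uniformities has as a basis the relations "agree on the finite set `s`",
and a map into a discrete space is uniformly continuous iff `{(x, y) | g x = g y}` is an entourage.
-/

open Filter Uniformity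

theorem uniformContinuous_iff_of_discreteUniformity {α β : Type*} [UniformSpace α] [UniformSpace β]
    [DiscreteUniformity β] {f : α → β} :
    UniformContinuous f ↔ {p : α × α | f p.1 = f p.2} ∈ 𝓤 α := by
  rw [UniformContinuous, DiscreteUniformity.eq_principal_setRelId β, tendsto_principal]
  rfl

section

variable {I : Type*} {A : I → Type*} [∀ i, UniformSpace (A i)] [∀ i, DiscreteUniformity (A i)]

theorem Pi.uniformity_of_discreteUniformity :
    𝓤 (∀ i, A i) = ⨅ i, 𝓟 {p : (∀ i, A i) × (∀ i, A i) | p.1 i = p.2 i} := by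
  simp only [Pi.uniformity, DiscreteUniformity.eq_principal_setRelId, comap_principal]
  rfl

theorem Pi.hasBasis_uniformity_of_discreteUniformity :
    (𝓤 (∀ i, A i)).HasBasis (fun _ : Finset I => True)
      fun s => {p : (∀ i, A i) × (∀ i, A i) | ∀ i ∈ s, p.1 i = p.2 i} := by
  rw [Pi.uniformity_of_discreteUniformity]
  refine ⟨fun t => ?_⟩
  simp [mem_iInf_finite, Set.ofPred_forall]

theorem uniformContinuous_pi_iff_of_discreteUniformity {β : Type*} [UniformSpace β]
    [DiscreteUniformity β] {g : (∀ i, A i) → β} :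
    UniformContinuous g ↔ ∃ s : Finset I, ∀ x y : ∀ i, A i, (∀ i ∈ s, x i = y i) → g x = g y := by
  rw [uniformContinuous_iff_of_discreteUniformity,
    Pi.hasBasis_uniformity_of_discreteUniformity.mem_iff]
  simp [Set.subset_def]

end

theorem stmt_11_general (A I : Type*) (g : (I → A) → A) :
    @UniformContinuous (I → A) A
        (Pi.uniformSpace (fun _ : I => A) (U := fun _ => ⊥)) ⊥ g ↔
      ∃ s : Finset I, ∀ x y : I → A, (∀ i ∈ s, x i = y i) → g x = g y := by
  let _ : UniformSpace A := ⊥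
  exact uniformContinuous_pi_iff_of_discreteUniformity

/-- With `A` carrying the discrete uniformity (`⊥`) and `I → A` the product
uniformity, a function `g : (I → A) → A` is uniformly continuous iff it is finitely
determined. -/
theorem stmt_11 (A I : Type*) [Infinite A] (g : (I → A) → A) :
    @UniformContinuous (I → A) A
        (Pi.uniformSpace (fun _ : I => A) (U := fun _ => ⊥)) ⊥ g ↔
      ∃ s : Finset I, ∀ x y : I → A, (∀ i ∈ s, x i = y i) → g x = g y :=
  stmt_11_general A I g
end

section
/- Let M be a clone-compatible L_A-structure, let f : (I → A) → (J → A) be uniformly continuous (A discrete, products with product uniformity), let α : I → M, and define β : J → M by β j = φ_α (fun x => f x j). Call a set R ⊆ (J → A) φ_β-stabilizing if for all finitely determined ℓ₁, ℓ₂ : (J → A) → A that agree on R, φ_β(ℓ₁) = φ_β(ℓ₂); define φ_α-stabilizing subsets of I → A analogously. Then for all finitely determined ℓ₁, ℓ₂ : (J → A) → A, with R = {y | ℓ₁ y = ℓ₂ y}: R is φ_β-stabilizing if and only if f⁻¹(R) is φ_α-stabilizing. -/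
open FirstOrder Language

/-- A set `R ⊆ (I → A)` is `φ`-stabilizing if any two finitely determined functions agreeing
on `R` have the same image under `φ`. -/
def Stabilizing {A I M : Type*} (φ : FinDet A I → M) (R : Set (I → A)) : Prop :=
  ∀ ℓ₁ ℓ₂ : FinDet A I, (∀ x ∈ R, ℓ₁.1 x = ℓ₂.1 x) → φ ℓ₁ = φ ℓ₂

/-! The map `φ_β` factors through `φ_α`: `φ_β ℓ = φ_α (ℓ ∘ f)`, because both sides commute with
the `L_A`-operations and agree on projections, through which every finitely determined `ℓ`
factors. For an equalizer `{c₁ = c₂}`, being `φ`-stabilizing is equivalent to `φ c₁ = φ c₂`, so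
both sides of the theorem say `φ_α (ℓ₁ ∘ f) = φ_α (ℓ₂ ∘ f)`. -/

theorem comp_mem_finDet {A I J : Type*} {f : (I → A) → (J → A)}
    (hcoord : ∀ j : J, (fun x : I → A => f x j) ∈ FinDet A I) {ℓ : (J → A) → A}
    (hℓ : ℓ ∈ FinDet A J) : (fun x => ℓ (f x)) ∈ FinDet A I := by
  classical
  choose s hs using hcoord
  obtain ⟨t, ht⟩ := hℓ
  refine ⟨t.biUnion s, fun x y hxy => ht _ _ fun j hj => hs j x y fun i hi => hxy i ?_⟩
  exact Finset.mem_biUnion.2 ⟨j, hj, hi⟩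

theorem exists_eq_comp_of_mem_finDet {A I : Type*} [Nonempty A] {ℓ : (I → A) → A}
    (hℓ : ℓ ∈ FinDet A I) :
    ∃ (n : ℕ) (e : Fin n → I) (G : (Fin n → A) → A), ∀ x, ℓ x = G fun k => x (e k) := by
  obtain ⟨s, hs⟩ := hℓ
  let e : Fin s.card → I := fun k => s.equivFin.symm k
  have he : Function.Injective e := Subtype.val_injective.comp s.equivFin.symm.injective
  refine ⟨s.card, e, fun w => ℓ (Function.extend e w fun _ => Classical.arbitrary A),
    fun x => hs _ _ fun i hi => ?_⟩
  have hei : e (s.equivFin ⟨i, hi⟩) = i := by simp [e]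
  rw [← hei, he.extend_apply]

section

variable {A I M : Type*} [(LA A).Structure M]

theorem CloneCompatible.funMap_reindex (hM : CloneCompatible A M) {n m : ℕ}
    (g : (Fin n → A) → A) (r : Fin n → Fin m) (x : Fin m → M) :
    Structure.funMap (L := LA A) (fun v : Fin m → A => g fun k => v (r k)) x =
      Structure.funMap (L := LA A) g fun k => x (r k) := by
  rw [hM.2 n m g (fun k v => v (r k)) x]
  simp only [hM.1]

variable {α : I → M} {φ : FinDet A I → M}

theorem IsPhi.apply_eq_funMap (hφ : IsPhi α φ) {n : ℕ} (G : (Fin n → A) → A)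
    (ℓ : Fin n → FinDet A I) (g : FinDet A I) (hg : ∀ x, g.1 x = G fun k => (ℓ k).1 x) :
    φ g = Structure.funMap (L := LA A) G fun k => φ (ℓ k) := by
  obtain ⟨g, hmem⟩ := g
  obtain rfl : g = _ := funext hg
  exact hφ.2 n G ℓ hmem

/-- `g₁` is the selector `if c₁ = c₂ then g₂ else g₁` applied to `c₁, c₂, g₁, g₂`; in `M` the
test sees equal arguments, and clone-compatibility lets the selector collapse to `g₂`. -/
theorem IsPhi.eq_of_eqOn_setOf_eq (hM : CloneCompatible A M) (hφ : IsPhi α φ)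
    {c₁ c₂ g₁ g₂ : FinDet A I} (hc : φ c₁ = φ c₂)
    (hg : ∀ x, c₁.1 x = c₂.1 x → g₁.1 x = g₂.1 x) : φ g₁ = φ g₂ := by
  classical
  let sel : (Fin 4 → A) → A := fun v => if v 0 = v 1 then v 3 else v 2
  let ℓ : Fin 4 → FinDet A I := ![c₁, c₂, g₁, g₂]
  let X : Fin 4 → M := fun k => φ (ℓ k)
  let r : Fin 4 → Fin 4 := ![0, 0, 2, 3]
  have hX : (fun k => X (r k)) = X := by
    funext k; fin_cases k <;> simp [X, ℓ, r, hc]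
  calc φ g₁ = Structure.funMap (L := LA A) sel X :=
        hφ.apply_eq_funMap sel ℓ g₁ fun x => by
          by_cases h : c₁.1 x = c₂.1 x <;> simp [sel, ℓ, h, hg]
    _ = Structure.funMap (L := LA A) (fun v : Fin 4 → A => sel fun k => v (r k)) X := by
        rw [hM.funMap_reindex, hX]
    _ = Structure.funMap (L := LA A) (fun v : Fin 4 → A => v 3) X := by
        congr 1; funext v; simp [sel, r]
    _ = φ g₂ := hM.1 4 3 X

theorem stabilizing_setOf_eq_iff (hM : CloneCompatible A M) (hφ : IsPhi α φ)
    (c₁ c₂ : FinDet A I) : Stabilizing φ {x | c₁.1 x = c₂.1 x} ↔ φ c₁ = φ c₂ :=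
  ⟨fun h => h c₁ c₂ fun _ hx => hx, fun hc _ _ hg => hφ.eq_of_eqOn_setOf_eq hM hc hg⟩

end

theorem IsPhi.apply_eq_apply_comp {A I J M : Type*} [Nonempty A] [(LA A).Structure M]
    {f : (I → A) → (J → A)} {α : I → M} {φα : FinDet A I → M} (hφα : IsPhi α φα)
    (hcoord : ∀ j : J, (fun x : I → A => f x j) ∈ FinDet A I) {φβ : FinDet A J → M}
    (hφβ : IsPhi (fun j : J => φα ⟨fun x => f x j, hcoord j⟩) φβ) (ℓ : FinDet A J) :
    φβ ℓ = φα ⟨fun x => ℓ.1 (f x), comp_mem_finDet hcoord ℓ.2⟩ := by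
  obtain ⟨n, e, G, hG⟩ := exists_eq_comp_of_mem_finDet ℓ.2
  calc φβ ℓ = Structure.funMap (L := LA A) G fun k => φβ ⟨_, projMem A (e k)⟩ :=
        hφβ.apply_eq_funMap G _ ℓ hG
    _ = Structure.funMap (L := LA A) G fun k => φα ⟨_, hcoord (e k)⟩ := by
        simp only [hφβ.1]
    _ = φα ⟨fun x => ℓ.1 (f x), comp_mem_finDet hcoord ℓ.2⟩ :=
        (hφα.apply_eq_funMap G _ _ fun x => hG (f x)).symm

theorem stmt_16_general (A I J M : Type*) [Infinite A] [(LA A).Structure M]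
    (hM : CloneCompatible A M) (f : (I → A) → (J → A))
    (α : I → M) (φα : FinDet A I → M) (hφα : IsPhi α φα)
    (hcoord : ∀ j : J, (fun x : I → A => f x j) ∈ FinDet A I)
    (φβ : FinDet A J → M)
    (hφβ : IsPhi (fun j : J => φα ⟨fun x => f x j, hcoord j⟩) φβ) :
    ∀ ℓ₁ ℓ₂ : FinDet A J,
      Stabilizing φβ {y : J → A | ℓ₁.1 y = ℓ₂.1 y} ↔
        Stabilizing φα (f ⁻¹' {y : J → A | ℓ₁.1 y = ℓ₂.1 y}) := by
  intro ℓ₁ ℓ₂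
  rw [stabilizing_setOf_eq_iff hM hφβ, IsPhi.apply_eq_apply_comp hφα hcoord hφβ,
    IsPhi.apply_eq_apply_comp hφα hcoord hφβ]
  exact (stabilizing_setOf_eq_iff hM hφα _ _).symm

/-- Let `M` be clone-compatible, `f : (I → A) → (J → A)` uniformly continuous
(`A` discrete, products with the product uniformity), `α : I → M`, and let `β : J → M` be
given by `β j = φ_α (fun x => f x j)`.  Then for all finitely determined
`ℓ₁, ℓ₂ : (J → A) → A`, the equalizer `R = {y | ℓ₁ y = ℓ₂ y}` is `φ_β`-stabilizing iff
`f ⁻¹' R` is `φ_α`-stabilizing. -/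
theorem stmt_16 (A I J M : Type*) [Infinite A] [(LA A).Structure M]
    (hM : CloneCompatible A M) (f : (I → A) → (J → A))
    (hf : @UniformContinuous (I → A) (J → A)
        (Pi.uniformSpace (fun _ : I => A) (U := fun _ => ⊥))
        (Pi.uniformSpace (fun _ : J => A) (U := fun _ => ⊥)) f)
    (α : I → M) (φα : FinDet A I → M) (hφα : IsPhi α φα)
    (hcoord : ∀ j : J, (fun x : I → A => f x j) ∈ FinDet A I)
    (φβ : FinDet A J → M)
    (hφβ : IsPhi (fun j : J => φα ⟨fun x => f x j, hcoord j⟩) φβ) :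
    ∀ ℓ₁ ℓ₂ : FinDet A J,
      Stabilizing φβ {y : J → A | ℓ₁.1 y = ℓ₂.1 y} ↔
        Stabilizing φα (f ⁻¹' {y : J → A | ℓ₁.1 y = ℓ₂.1 y}) :=
  stmt_16_general A I J M hM f α φα hφα hcoord φβ hφβ
end

section
/- Let M be a clone-compatible L_A-structure. If there is a finite subset S ⊆ M such that the L_A-substructure generated by S is all of M, then there is a single element m ∈ M such that the L_A-substructure generated by {m} is all of M. -/
open FirstOrder Language

/-!
Since `A` is infinite, there is an injection `p : Aⁿ → A`; let `q` be a left inverse. If `x`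
enumerates a finite generating set, the single element `p^M(x)` generates every `x k`: the unary
operation `a ↦ q(a) k` composed with `p` is the `k`-th projection, and clone-compatibility
transfers this identity of operations on `A` to their interpretations in `M`.
-/

universe u v

open Cardinal in
theorem exists_injective_fun_of_finite (ι : Type u) (A : Type v) [Finite ι] [Infinite A] :
    ∃ p : (ι → A) → A, Function.Injective p := by
  have : lift.{v} #(ι → A) ≤ lift.{max u v} #A := by
    rw [mk_arrow, lift_power, lift_lift, lift_lift, lift_umax]
    exact pow_le (by simp) (by simp)
  obtain ⟨p⟩ := lift_mk_le.1 this
  exact ⟨p, p.injective⟩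

theorem CloneCompatible.mem_closure_singleton_funMap_of_leftInverse {A M : Type*}
    [(LA A).Structure M] (hM : CloneCompatible A M) {n : ℕ} {p : (Fin n → A) → A}
    {q : A → Fin n → A} (hqp : Function.LeftInverse q p) (x : Fin n → M) (k : Fin n) :
    x k ∈ Substructure.closure (LA A) {Structure.funMap (L := LA A) p x} := by
  let unpack : (Fin 1 → A) → A := fun w => q (w 0) k
  have hproj : (fun v : Fin n → A => unpack fun _ => p v) = fun v => v k :=
    funext fun v => congrFun (hqp v) k
  have hx : x k =
      Structure.funMap (L := LA A) unpack fun _ => Structure.funMap (L := LA A) p x := by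
    rw [← hM.1 n k x, ← hproj, hM.2]
  rw [hx]
  exact Substructure.fun_mem _ _ _ fun _ => Substructure.subset_closure rfl

/-- If a clone-compatible `L_A`-structure `M` is generated (as an
`L_A`-substructure) by a finite subset, then it is generated by a single element. -/
theorem stmt_18 (A : Type*) [Infinite A] (M : Type*) [(LA A).Structure M]
    (hM : CloneCompatible A M) (S : Set M) (hS : S.Finite)
    (hgen : Substructure.closure (LA A) S = ⊤) :
    ∃ m : M, Substructure.closure (LA A) ({m} : Set M) = ⊤ := by
  obtain ⟨n, x, -, rfl⟩ := hS.fin_param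
  obtain ⟨p, hp⟩ := exists_injective_fun_of_finite (Fin n) A
  refine ⟨Structure.funMap (L := LA A) p x, top_unique ?_⟩
  rw [← hgen, Substructure.closure_le]
  rintro _ ⟨k, rfl⟩
  exact hM.mem_closure_singleton_funMap_of_leftInverse (Function.leftInverse_invFun hp) x k
end
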